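/- arXiv:0803.0728 — 5 statements merged into one kernel-verified Lean document; each statement's English description precedes it below -/
import Mathlib

section
/- Let W : ℤ → K be a nondegenerate elliptic divisibility sequence over a field K (so W(1) = 1 and W(2), W(3) ≠ 0), and suppose W(m) = 0 for some m ≥ 4, with W(m+1), W(m+2) ≠ 0 and W(n) ≠ 0 for 0 < n < m. Define a = W(m+2)/(W(m+1)W(2)) and b = W(m+1)²W(2)/W(m+2). Then for all integers l and v, W(lm + v) = W(v)·a^{vl}·b^{l²}. -/
/-!
Twisting a solution of the recurrence by `n ↦ c * d ^ n` or translating it keeps it a solution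
of the same recurrence (the coefficients `W k` are untouched), and such a solution is determined
on `n ≥ 0` by its values at `0, …, 4` once `W 2 ≠ 0`, through the duplication formulas. Because
`W m = 0`, the recurrence computes `W (m + j) = W j * a ^ j * b` for `j ≤ 4`, so
`n ↦ W (n + m) / (a ^ n * b)` agrees with `W` on `n ≥ 0`. The instance `k = m` of the recurrence
reads `W (n + m) * W (n - m) = b ^ 2 * W n ^ 2`; it carries the shift formula over to `n < 0`
and, at `n = m - 1`, gives `a ^ m = b ^ 2`. Iterating the shift formula then gives the theorem.
-/

/-- `U` satisfies the recurrence of an elliptic divisibility sequence whose coefficients `W k`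
are taken from `W`; the recurrence of `W` itself is `EDSRecurrence W W`. -/
def EDSRecurrence {R : Type*} [CommRing R] (W U : ℤ → R) : Prop :=
  ∀ n k : ℤ, U (n + k) * U (n - k) =
    U (n + 1) * U (n - 1) * W k ^ 2 - W (k + 1) * W (k - 1) * U n ^ 2

namespace EDSRecurrence

section CommRing

variable {R : Type*} [CommRing R] {W U : ℤ → R}

theorem comp_add_const (h : EDSRecurrence W U) (m : ℤ) :
    EDSRecurrence W fun n ↦ U (n + m) := by
  intro n k
  convert h (n + m) k using 3 <;> ring_nf

theorem eqOn_Ici_of_eqOn_Icc [IsDomain R] (hW : EDSRecurrence W W) (hU : EDSRecurrence W U)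
    (h1 : W 1 ≠ 0) (h2 : W 2 ≠ 0) (hbase : Set.EqOn U W (Set.Icc 0 4)) :
    Set.EqOn U W (Set.Ici 0) := by
  intro n
  induction n using Int.strongRec (m := 5) with
  | lt n hn => exact fun hn0 ↦ hbase ⟨hn0, by omega⟩
  | ge n hn ih =>
    intro _
    have ih' : ∀ j, 0 ≤ j → j < n → U j = W j := fun j hj hjn ↦ ih j hjn hj
    obtain ⟨k, rfl | rfl⟩ := Int.even_or_odd' n
    · have e := hU (k + 1) (k - 1)
      rw [ih' (k + 1 - (k - 1)) (by omega) (by omega), ih' (k + 1 + 1) (by omega) (by omega),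
        ih' (k + 1 - 1) (by omega) (by omega), ih' (k + 1) (by omega) (by omega)] at e
      rw [show 2 * k = k + 1 + (k - 1) by ring]
      have h2' : W (k + 1 - (k - 1)) ≠ 0 := by rwa [show k + 1 - (k - 1) = 2 by ring]
      exact mul_right_cancel₀ h2' (e.trans (hW (k + 1) (k - 1)).symm)
    · have e := hU (k + 1) k
      rw [ih' (k + 1 - k) (by omega) (by omega), ih' (k + 1 + 1) (by omega) (by omega),
        ih' (k + 1 - 1) (by omega) (by omega), ih' (k + 1) (by omega) (by omega)] at e
      rw [show 2 * k + 1 = k + 1 + k by ring]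
      have h1' : W (k + 1 - k) ≠ 0 := by rwa [show k + 1 - k = 1 by ring]
      exact mul_right_cancel₀ h1' (e.trans (hW (k + 1) k).symm)

end CommRing

section Field

variable {K : Type*} [Field K] {W U : ℤ → K} {m : ℤ} {a b : K}

theorem const_mul_zpow_mul (h : EDSRecurrence W U) (c : K) {d : K} (hd : d ≠ 0) :
    EDSRecurrence W fun n ↦ c * d ^ n * U n := by
  intro n k
  have hk : d ^ (n + k) * d ^ (n - k) = d ^ n * d ^ n := by
    rw [← zpow_add₀ hd, ← zpow_add₀ hd]; ring_nf
  have h1 : d ^ (n + 1) * d ^ (n - 1) = d ^ n * d ^ n := by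
    rw [← zpow_add₀ hd, ← zpow_add₀ hd]; ring_nf
  linear_combination (c ^ 2 * d ^ n * d ^ n) * h n k + c ^ 2 * U (n + k) * U (n - k) * hk -
    c ^ 2 * U (n + 1) * U (n - 1) * W k ^ 2 * h1

theorem apply_add_three (hW : EDSRecurrence W W) (h1 : W 1 = 1) (h2 : W 2 ≠ 0) (hm : W m = 0)
    (ha : a ≠ 0) (hb : b ≠ 0) (hm1 : W (m + 1) = a * b) (hm2 : W (m + 2) = W 2 * a ^ 2 * b) :
    W (m + 3) = W 3 * a ^ 3 * b := by
  have e := hW (m + 2) 2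
  simp only [add_assoc, add_sub_assoc, Int.reduceAdd, Int.reduceSub, add_zero, hm, h1, hm1,
    hm2] at e
  apply mul_right_cancel₀ (mul_ne_zero (mul_ne_zero ha hb) (pow_ne_zero 2 h2))
  linear_combination -e

theorem apply_add_four (hW : EDSRecurrence W W) (h1 : W 1 = 1) (h2 : W 2 ≠ 0) (h3 : W 3 ≠ 0)
    (hm : W m = 0) (ha : a ≠ 0) (hb : b ≠ 0) (hm1 : W (m + 1) = a * b)
    (hm2 : W (m + 2) = W 2 * a ^ 2 * b) : W (m + 4) = W 4 * a ^ 4 * b := by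
  have e := hW (m + 3) 3
  simp only [add_assoc, add_sub_assoc, Int.reduceAdd, Int.reduceSub, add_zero, hm, hm2,
    hW.apply_add_three h1 h2 hm ha hb hm1 hm2] at e
  apply mul_right_cancel₀
    (mul_ne_zero (mul_ne_zero (mul_ne_zero h2 (pow_ne_zero 2 ha)) hb) (pow_ne_zero 2 h3))
  linear_combination -e

theorem apply_sub_one_mul (hW : EDSRecurrence W W) (h1 : W 1 = 1) (h2 : W 2 ≠ 0) (h3 : W 3 ≠ 0)
    (hm : W m = 0) (ha : a ≠ 0) (hb : b ≠ 0) (hm1 : W (m + 1) = a * b)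
    (hm2 : W (m + 2) = W 2 * a ^ 2 * b) : W (m - 1) * a = -b := by
  have e := hW (m + 1) 2
  simp only [add_assoc, add_sub_assoc, Int.reduceAdd, Int.reduceSub, ← sub_eq_add_neg, add_zero,
    hm, h1, hm1, hW.apply_add_three h1 h2 hm ha hb hm1 hm2] at e
  apply mul_left_cancel₀ (mul_ne_zero (mul_ne_zero h3 (pow_ne_zero 2 ha)) hb)
  linear_combination e

theorem apply_add_mul_apply_sub (hW : EDSRecurrence W W) (h1 : W 1 = 1) (h2 : W 2 ≠ 0)
    (h3 : W 3 ≠ 0) (hm : W m = 0) (ha : a ≠ 0) (hb : b ≠ 0) (hm1 : W (m + 1) = a * b)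
    (hm2 : W (m + 2) = W 2 * a ^ 2 * b) (n : ℤ) :
    W (n + m) * W (n - m) = b ^ 2 * W n ^ 2 := by
  have e := hW n m
  rw [hm, hm1] at e
  linear_combination e - b * W n ^ 2 * hW.apply_sub_one_mul h1 h2 h3 hm ha hb hm1 hm2

theorem apply_add_of_nonneg (hW : EDSRecurrence W W) (h0 : W 0 = 0) (h1 : W 1 = 1)
    (h2 : W 2 ≠ 0) (h3 : W 3 ≠ 0) (hm : W m = 0) (ha : a ≠ 0) (hb : b ≠ 0)
    (hm1 : W (m + 1) = a * b) (hm2 : W (m + 2) = W 2 * a ^ 2 * b) {n : ℤ} (hn : 0 ≤ n) :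
    W (n + m) = W n * a ^ n * b := by
  have hU := (hW.comp_add_const m).const_mul_zpow_mul b⁻¹ (inv_ne_zero ha)
  have hbase : Set.EqOn (fun n ↦ b⁻¹ * a⁻¹ ^ n * W (n + m)) W (Set.Icc 0 4) := by
    rintro j ⟨hj0, hj4⟩
    have h3' := hW.apply_add_three h1 h2 hm ha hb hm1 hm2
    have h4' := hW.apply_add_four h1 h2 h3 hm ha hb hm1 hm2
    interval_cases j <;> simp [add_comm _ m, hm, h0, h1, hm1, hm2, h3', h4'] <;> field_simp
  have hagree := hW.eqOn_Ici_of_eqOn_Icc hU (by simp [h1]) h2 hbase hn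
  simp only [inv_zpow] at hagree
  rw [← hagree]
  field_simp

theorem zpow_eq_sq (hW : EDSRecurrence W W) (h0 : W 0 = 0) (h1 : W 1 = 1)
    (hneg1 : W (-1) = -1) (h2 : W 2 ≠ 0) (h3 : W 3 ≠ 0) (hm : W m = 0) (hm0 : 0 < m)
    (ha : a ≠ 0) (hb : b ≠ 0) (hm1 : W (m + 1) = a * b) (hm2 : W (m + 2) = W 2 * a ^ 2 * b) :
    a ^ m = b ^ 2 := by
  have hsub := hW.apply_sub_one_mul h1 h2 h3 hm ha hb hm1 hm2
  have hsub0 : W (m - 1) ≠ 0 := fun h ↦ hb (by simpa [h] using hsub)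
  have hprod := hW.apply_add_mul_apply_sub h1 h2 h3 hm ha hb hm1 hm2 (m - 1)
  rw [hW.apply_add_of_nonneg h0 h1 h2 h3 hm ha hb hm1 hm2 (by omega : 0 ≤ m - 1),
    show m - 1 - m = -1 by ring, hneg1] at hprod
  rw [← sub_add_cancel m 1, zpow_add_one₀ ha]
  apply mul_left_cancel₀ (mul_ne_zero hsub0 hb)
  linear_combination (-a) * hprod - b ^ 2 * W (m - 1) * hsub

theorem apply_add (hW : EDSRecurrence W W) (h0 : W 0 = 0) (h1 : W 1 = 1)
    (hodd : ∀ n, W (-n) = -W n) (h2 : W 2 ≠ 0) (h3 : W 3 ≠ 0) (hm : W m = 0)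
    (hnz : ∀ n, 0 < n → n < m → W n ≠ 0) (ha : a ≠ 0) (hb : b ≠ 0)
    (hm1 : W (m + 1) = a * b) (hm2 : W (m + 2) = W 2 * a ^ 2 * b) (n : ℤ) :
    W (n + m) = W n * a ^ n * b := by
  have hshift {n : ℤ} (hn : 0 ≤ n) := hW.apply_add_of_nonneg h0 h1 h2 h3 hm ha hb hm1 hm2 hn
  rcases le_or_gt 0 n with hn | hn
  · exact hshift hn
  by_cases hWn : W n = 0
  · have hmn : m ≤ -n := by
      by_contra
      exact hnz (-n) (by omega) (by omega) (by rw [hodd, hWn, neg_zero])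
    have e := hshift (by omega : 0 ≤ -n - m)
    rw [sub_add_cancel, hodd, hWn, neg_zero, show -n - m = -(n + m) by ring, hodd] at e
    have hWnm : W (n + m) = 0 := by simpa [hb, zpow_ne_zero, ha] using e.symm
    simp [hWnm, hWn]
  · have hprod := hW.apply_add_mul_apply_sub h1 h2 h3 hm ha hb hm1 hm2 (-n)
    rw [hshift (by omega), show -n - m = -(n + m) by ring, hodd, hodd] at hprod
    have hinv : a ^ (-n) * a ^ n = 1 := by rw [zpow_neg, inv_mul_cancel₀ (zpow_ne_zero _ ha)]
    apply mul_left_cancel₀ (mul_ne_zero (mul_ne_zero hWn (zpow_ne_zero (-n) ha)) hb)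
    linear_combination hprod - W n ^ 2 * b ^ 2 * hinv

end Field

end EDSRecurrence

theorem apply_mul_add_of_apply_add {G₀ : Type*} [CommGroupWithZero G₀] {W : ℤ → G₀} {m : ℤ}
    {a b : G₀} (ha : a ≠ 0) (hb : b ≠ 0) (hab : a ^ m = b ^ 2)
    (hW : ∀ n, W (n + m) = W n * a ^ n * b) (l v : ℤ) :
    W (l * m + v) = W v * a ^ (v * l) * b ^ (l ^ 2) := by
  have step : ∀ l : ℤ, a ^ (v * (l + 1)) * b ^ ((l + 1) ^ 2) =
      a ^ (v * l) * b ^ (l ^ 2) * (a ^ (l * m + v) * b) := by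
    intro l
    have hb2 : b ^ (2 * l) = a ^ (l * m) := by
      rw [zpow_mul, zpow_ofNat, ← hab, ← zpow_mul, mul_comm]
    rw [show (l + 1) ^ 2 = l ^ 2 + 2 * l + 1 by ring, mul_add, zpow_add₀ ha, zpow_add₀ ha,
      zpow_add₀ hb, zpow_add₀ hb, hb2, mul_one, zpow_one]
    ac_rfl
  rw [mul_assoc]
  induction l with
  | zero => simp
  | succ l ih =>
    rw [show ((l : ℤ) + 1) * m + v = l * m + v + m by ring, hW, mul_assoc, ih, mul_assoc,
      ← step]
  | pred l ih =>
    have e := hW ((-l - 1) * m + v)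
    have hstep := step (-l - 1)
    rw [sub_add_cancel] at hstep
    rw [show (-l - 1) * m + v + m = -l * m + v by ring, ih, hstep] at e
    have hne : a ^ ((-l - 1) * m + v) * b ≠ 0 := mul_ne_zero (zpow_ne_zero _ ha) hb
    exact mul_right_cancel₀ hne (by simpa only [mul_assoc] using e.symm)

/-- Ward's symmetry theorem for elliptic divisibility sequences. -/
theorem eds_ward_symmetry (K : Type*) [Field K] (W : ℤ → K) (m : ℤ)
    (hrec : ∀ n m' : ℤ, W (n + m') * W (n - m') =
      W (n + 1) * W (n - 1) * W m' ^ 2 - W (m' + 1) * W (m' - 1) * W n ^ 2)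
    (h0 : W 0 = 0) (h1 : W 1 = 1) (hodd : ∀ n : ℤ, W (-n) = -W n)
    (h2 : W 2 ≠ 0) (h3 : W 3 ≠ 0)
    (hm4 : 4 ≤ m) (hm : W m = 0)
    (hm1 : W (m + 1) ≠ 0) (hm2 : W (m + 2) ≠ 0)
    (hnz : ∀ n : ℤ, 0 < n → n < m → W n ≠ 0)
    (a b : K)
    (ha : a = W (m + 2) / (W (m + 1) * W 2))
    (hb : b = W (m + 1) ^ 2 * W 2 / W (m + 2)) :
    ∀ l v : ℤ, W (l * m + v) = W v * a ^ (v * l) * b ^ (l ^ 2) := by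
  have hW : EDSRecurrence W W := hrec
  have ha0 : a ≠ 0 := by rw [ha]; exact div_ne_zero hm2 (mul_ne_zero hm1 h2)
  have hb0 : b ≠ 0 := by rw [hb]; exact div_ne_zero (mul_ne_zero (pow_ne_zero 2 hm1) h2) hm2
  have hab1 : W (m + 1) = a * b := by rw [ha, hb]; field_simp
  have hab2 : W (m + 2) = W 2 * a ^ 2 * b := by rw [ha, hb]; field_simp
  exact apply_mul_add_of_apply_add ha0 hb0
    (hW.zpow_eq_sq h0 h1 (by rw [hodd, h1]) h2 h3 hm (by omega) ha0 hb0 hab1 hab2)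
    (hW.apply_add h0 h1 hodd h2 h3 hm hnz ha0 hb0 hab1 hab2)
end

section
/- With notation as in Ward's symmetry theorem (W an EDS with W(m) = 0, a = W(m+2)/(W(m+1)W(2)), b = W(m+1)²W(2)/W(m+2)), one has a^m = b². -/
/-- In Ward's symmetry theorem, the parameters satisfy `a ^ m = b ^ 2`. -/
theorem eds_am_eq_b_sq (K : Type*) [Field K] (W : ℤ → K) (m : ℤ)
    (hrec : ∀ n m' : ℤ, W (n + m') * W (n - m') =
      W (n + 1) * W (n - 1) * W m' ^ 2 - W (m' + 1) * W (m' - 1) * W n ^ 2)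
    (h0 : W 0 = 0) (h1 : W 1 = 1) (hodd : ∀ n : ℤ, W (-n) = -W n)
    (h2 : W 2 ≠ 0) (h3 : W 3 ≠ 0)
    (hm4 : 4 ≤ m) (hm : W m = 0)
    (hm1 : W (m + 1) ≠ 0) (hm2 : W (m + 2) ≠ 0)
    (hnz : ∀ n : ℤ, 0 < n → n < m → W n ≠ 0)
    (a b : K)
    (ha : a = W (m + 2) / (W (m + 1) * W 2))
    (hb : b = W (m + 1) ^ 2 * W 2 / W (m + 2))
    (hper : ∀ l v : ℤ, W (l * m + v) = W v * a ^ (v * l) * b ^ (l ^ 2)) :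
    a ^ m = b ^ 2 := by
  have ha0 : a ≠ 0 := by rw [ha]; exact div_ne_zero hm2 (mul_ne_zero hm1 h2)
  have hb0 : b ≠ 0 := by
    rw [hb]; exact div_ne_zero (mul_ne_zero (pow_ne_zero 2 hm1) h2) hm2
  have e1 := hper 1 (m + 1)
  have e2 := hper 2 1
  have e3 := hper 1 1
  have h12 : (1 : ℤ) * m + (m + 1) = 2 * m + 1 := by ring
  rw [h12] at e1
  have key : W (m + 1) * a ^ ((m + 1) * 1) * b ^ ((1 : ℤ) ^ 2)
      = W 1 * a ^ ((1 : ℤ) * 2) * b ^ ((2 : ℤ) ^ 2) := e1.symm.trans e2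
  have h11 : (1 : ℤ) * m + 1 = m + 1 := by ring
  rw [h11, h1, one_mul] at e3
  rw [h1, e3] at key
  have key2 : a * b * a ^ (m + 1) * b = a ^ (2 : ℤ) * b ^ (4 : ℤ) := by
    have : ((m : ℤ) + 1) * 1 = m + 1 := by ring
    rw [this] at key
    norm_num at key ⊢
    convert key using 2 <;> norm_num
  rw [zpow_add_one₀ ha0] at key2
  have h2z : a ^ (2 : ℤ) = a * a := by
    rw [show (2:ℤ) = 1 + 1 by norm_num, zpow_add_one₀ ha0, zpow_one]
  have h4z : b ^ (4 : ℤ) = b * b * b * b := by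
    rw [show (4:ℤ) = 1 + 1 + 1 + 1 by norm_num, zpow_add_one₀ hb0,
      zpow_add_one₀ hb0, zpow_add_one₀ hb0, zpow_one]
  rw [h2z, h4z] at key2
  have : a ^ m = b * b := by
    apply mul_left_cancel₀ (mul_ne_zero (mul_ne_zero ha0 ha0)
      (mul_ne_zero hb0 hb0))
    calc a * a * (b * b) * a ^ m = a * b * (a ^ m * a) * b := by ring
    _ = a * a * (b * b) * (b * b) := by rw [key2]; ring
  rw [this, sq]
end

section
/- Let E be an elliptic curve over ℚ (or any field) and P a point of infinite order (or order > 3). Then the sequence W(n) = ψ_n(P) of division polynomial values satisfies the elliptic net recurrence: for all p, q, r, s ∈ ℤ, W(p+q+s)W(p−q)W(r+s)W(r) + W(q+r+s)W(q−r)W(p+s)W(p) + W(r+p+s)W(r−p)W(q+s)W(q) = 0. -/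
open Polynomial WeierstrassCurve

/-!
With `W 1 = 1`, the relation `ER(k, l, 1, u) = 0` (`ER` is `IsEllipticNet.rel`) for `u ∈ {0, 1}`
says that `W(k+l+u) W(k-l) W(1+u)` equals the `2 × 2` determinant `f k * e l - f l * e k` with
`f n = W(n+1+u) W(n-1)` and `e n = W(n+u) W(n)`. Writing `s = 2t + u`, each of the three products
in `ER(p, q, r, s)` is such a determinant at shifted indices, so the Plücker relation between
these determinants gives `ER(p, q, r, s) = 0` for all `p, q, r, s`.

For `normEDS b c d` with `b ≠ 0` the relations `ER(k, l, 1, u) = 0` are proved by induction on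
the level `k + l + u`, for `0 ≤ l ≤ k`; the other `(k, l)` follow by symmetry. The determinant at
`(k, l)`, times `b²` where needed, is `W(k+1)W(l) · W(k-1)W(l) - W(k)W(l+1) · W(k)W(l-1)` up to
shifts by `u`. By the induction hypothesis each of these four products is a determinant at halved
indices, and the Plücker relation turns the difference into a product of two diagonal
determinants, which the doubling formulas `normEDS_even` and `normEDS_odd` evaluate.

Finally `ψₙ(P) = normEDS (ψ₂(P)) (Ψ₃(P)) (preΨ₄(P)) n`, and `ψ₂(P) ≠ 0` because `2 • P ≠ 0`.
-/

lemma Int.forall_of_forall_le_of_swap_of_reflect {P : ℤ → ℤ → Prop} {u : ℤ} (hu : u ≤ 1)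
    (swap : ∀ k l, P k l → P l k) (reflect : ∀ k l, P k l → P (-k - u) l)
    (h : ∀ k l, 0 ≤ l → l ≤ k → P k l) (k l : ℤ) : P k l := by
  have reflect' (k l : ℤ) (hk : P (-k - u) l) : P k l := by
    simpa using reflect _ _ hk
  have nonneg (k l : ℤ) (hk : 0 ≤ k) (hl : 0 ≤ l) : P k l :=
    (le_total l k).elim (h k l hl) fun hkl ↦ swap _ _ (h l k hk hkl)
  have nonneg_right (k l : ℤ) (hl : 0 ≤ l) : P k l := by
    rcases le_or_gt 0 k with hk | hk
    · exact nonneg k l hk hl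
    · exact reflect' k l (nonneg _ l (by omega) hl)
  rcases le_or_gt 0 l with hl | hl
  · exact nonneg_right k l hl
  · exact swap _ _ (reflect' l k (swap _ _ (nonneg_right k _ (by omega))))

namespace IsEllipticNet

variable {R : Type*} [CommRing R]

def ellWedge (W : ℤ → R) (u k l : ℤ) : R :=
  W (k + 1 + u) * W (k - 1) * (W (l + u) * W l) - W (l + 1 + u) * W (l - 1) * (W (k + u) * W k)

lemma ellWedge_plucker (W : ℤ → R) (u a b c d : ℤ) :
    ellWedge W u a b * ellWedge W u c d - ellWedge W u a c * ellWedge W u b d +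
      ellWedge W u a d * ellWedge W u b c = 0 := by
  simp only [ellWedge]
  ring

lemma rel_one_eq (W : ℤ → R) (k l u : ℤ) :
    rel W k l 1 u = W (k + l + u) * W (k - l) * W (1 + u) * W 1 - ellWedge W u k l := by
  simp only [rel, ellWedge]
  ring

lemma rel_one_eq_zero_iff {W : ℤ → R} (h1 : W 1 = 1) {k l u : ℤ} :
    rel W k l 1 u = 0 ↔ W (k + l + u) * W (k - l) * W (1 + u) = ellWedge W u k l := by
  rw [rel_one_eq, h1, mul_one, sub_eq_zero]

lemma rel_swap {W : ℤ → R} (odd : W.Odd) (p q r s : ℤ) : rel W q p r s = -rel W p q r s := by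
  simp only [rel]
  rw [add_comm q p, ← neg_sub p q, odd]
  ring

lemma rel_neg_sub_left {W : ℤ → R} (odd : W.Odd) (p q r s : ℤ) :
    rel W (-p - s) q r s = rel W p q r s := by
  rw [rel_eq, rel_eq, show 2 * (-p - s) + s = -(2 * p + s) by ring, atomRel_neg₁ odd]

lemma rel_one_eq_zero_of_base {W : ℤ → R} (h0 : W 0 = 0) (odd : W.Odd) {k l u : ℤ}
    (hl : l = 0 ∨ l = 1 ∨ l = k) : rel W k l 1 u = 0 := by
  rcases hl with rfl | rfl | rfl
  · rw [rel_eq, mul_zero, zero_add, atomRel_same₂₄ odd, h0, mul_zero, zero_mul]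
  · rw [rel_eq, atomRel_same₂₃, h0, mul_zero, zero_mul]
  · rw [rel_eq, atomRel_same₁₂, h0, mul_zero, zero_mul]

theorem isEllipticNet_of_rel_one [IsDomain R] {W : ℤ → R} (h1 : W 1 = 1) (h2 : W 2 ≠ 0)
    (h : ∀ u, (u = 0 ∨ u = 1) → ∀ k l, rel W k l 1 u = 0) : IsEllipticNet W := by
  intro p q r s
  obtain ⟨t, u, hu, rfl⟩ : ∃ t u, (u = 0 ∨ u = 1) ∧ s = 2 * t + u :=
    ⟨s / 2, s % 2, by omega, by omega⟩
  have hW (k l : ℤ) : W (k + l + u) * W (k - l) * W (1 + u) = ellWedge W u k l :=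
    (rel_one_eq_zero_iff h1).1 (h u hu k l)
  have hc : W (1 + u) ≠ 0 := by rcases hu with rfl | rfl <;> simp [h1, h2]
  apply mul_right_cancel₀ (pow_ne_zero 2 hc)
  calc rel W p q r (2 * t + u) * W (1 + u) ^ 2
      = ellWedge W u (p + t) (q + t) * ellWedge W u (r + t) t -
          ellWedge W u (p + t) (r + t) * ellWedge W u (q + t) t +
          ellWedge W u (p + t) t * ellWedge W u (q + t) (r + t) := by
        simp only [← hW, rel]
        ring_nf
    _ = 0 * W (1 + u) ^ 2 := by
        rw [zero_mul]
        exact ellWedge_plucker W u (p + t) (q + t) (r + t) t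

def RelOneBelow (W : ℤ → R) (n : ℤ) : Prop :=
  ∀ u k l, (u = 0 ∨ u = 1) ∧ 0 ≤ l ∧ l ≤ k ∧ k + l + u < n → rel W k l 1 u = 0

section normEDS

variable {b c d : R}

local notation "W" => normEDS b c d

lemma ellWedge_normEDS_zero_add_one (n : ℤ) : ellWedge W 0 (n + 1) n = W (2 * n + 1) := by
  rw [normEDS_odd]
  simp only [ellWedge]
  ring_nf

lemma ellWedge_normEDS_zero_add_two (n : ℤ) : ellWedge W 0 (n + 2) n = W (2 * n + 2) * b := by
  rw [show 2 * n + 2 = 2 * (n + 1) by ring, normEDS_even]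
  simp only [ellWedge]
  ring_nf

lemma ellWedge_normEDS_one_sub_one (n : ℤ) : ellWedge W 1 n (n - 1) = W (2 * n) * b := by
  rw [normEDS_even]
  simp only [ellWedge]
  ring_nf

lemma ellWedge_normEDS_two_zero : ellWedge W 0 2 0 = b ^ 2 := by
  simp [ellWedge, sq]

lemma RelOneBelow.mul_eq {n : ℤ} (ih : RelOneBelow W n) {u k l : ℤ}
    (h : (u = 0 ∨ u = 1) ∧ 0 ≤ l ∧ l ≤ k ∧ k + l + u < n) :
    W (k + l + u) * W (k - l) * W (1 + u) = ellWedge W u k l :=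
  (rel_one_eq_zero_iff (normEDS_one ..)).1 (ih u k l h)

lemma rel_normEDS_add_one_sub_zero {m t : ℤ} (ht : 0 ≤ t) (htm : t + 2 ≤ m)
    (ih : RelOneBelow W (2 * m + 1)) : rel W (m + 1 + t) (m - t) 1 0 = 0 := by
  have S₁ := ih.mul_eq (u := 0) (k := m + 1) (l := t + 1) (by omega)
  have S₂ := ih.mul_eq (u := 0) (k := m) (l := t) (by omega)
  have S₃ := ih.mul_eq (u := 0) (k := m + 1) (l := t) (by omega)
  have S₄ := ih.mul_eq (u := 0) (k := m) (l := t + 1) (by omega)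
  rw [rel_one_eq_zero_iff (normEDS_one ..)]
  calc W (m + 1 + t + (m - t) + 0) * W (m + 1 + t - (m - t)) * W (1 + 0)
      = ellWedge W 0 (m + 1) m * ellWedge W 0 (t + 1) t := by
        simp only [ellWedge_normEDS_zero_add_one, add_zero, normEDS_one, mul_one]
        ring_nf
    _ = ellWedge W 0 (m + 1) (t + 1) * ellWedge W 0 m t -
          ellWedge W 0 (m + 1) t * ellWedge W 0 m (t + 1) := by
        linear_combination ellWedge_plucker W 0 (m + 1) m (t + 1) t
    _ = ellWedge W 0 (m + 1 + t) (m - t) := by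
        rw [← S₁, ← S₂, ← S₃, ← S₄]
        simp only [ellWedge, add_zero, normEDS_one]
        ring_nf

lemma rel_normEDS_add_one_sub_one {m t : ℤ} (ht : 0 ≤ t) (htm : t + 2 ≤ m)
    (ih : RelOneBelow W (2 * m + 2)) : rel W (m + 1 + t) (m - t) 1 1 = 0 := by
  have S₁ := ih.mul_eq (u := 0) (k := m + 2) (l := t + 1) (by omega)
  have S₂ := ih.mul_eq (u := 0) (k := m) (l := t) (by omega)
  have S₃ := ih.mul_eq (u := 0) (k := m + 2) (l := t) (by omega)
  have S₄ := ih.mul_eq (u := 0) (k := m) (l := t + 1) (by omega)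
  rw [rel_one_eq_zero_iff (normEDS_one ..)]
  calc W (m + 1 + t + (m - t) + 1) * W (m + 1 + t - (m - t)) * W (1 + 1)
      = ellWedge W 0 (m + 2) m * ellWedge W 0 (t + 1) t := by
        simp only [ellWedge_normEDS_zero_add_one, ellWedge_normEDS_zero_add_two,
          one_add_one_eq_two, normEDS_two]
        ring_nf
    _ = ellWedge W 0 (m + 2) (t + 1) * ellWedge W 0 m t -
          ellWedge W 0 (m + 2) t * ellWedge W 0 m (t + 1) := by
        linear_combination ellWedge_plucker W 0 (m + 2) m (t + 1) t
    _ = ellWedge W 1 (m + 1 + t) (m - t) := by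
        rw [← S₁, ← S₂, ← S₃, ← S₄]
        simp only [ellWedge, add_zero, normEDS_one]
        ring_nf

/-- `ER(m + 1, m - 1, 1, 1)` lies at the level of the step that needs it, but follows from the
relations `ER(·, ·, 1, 0)` below that level. -/
lemma ellWedge_normEDS_one_add_one_sub_one {m : ℤ} (hm : 3 ≤ m) (ih : RelOneBelow W (2 * m + 1)) :
    ellWedge W 1 (m + 1) (m - 1) = W (2 * m + 1) * b ^ 2 := by
  have S₁ := ih.mul_eq (u := 0) (k := m + 1) (l := 2) (by omega)
  have S₂ := ih.mul_eq (u := 0) (k := m) (l := 0) (by omega)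
  have S₃ := ih.mul_eq (u := 0) (k := m) (l := 2) (by omega)
  have S₄ := ih.mul_eq (u := 0) (k := m + 1) (l := 0) (by omega)
  calc ellWedge W 1 (m + 1) (m - 1)
      = ellWedge W 0 (m + 1) 2 * ellWedge W 0 m 0 - ellWedge W 0 m 2 * ellWedge W 0 (m + 1) 0 := by
        rw [← S₁, ← S₂, ← S₃, ← S₄]
        simp only [ellWedge, add_zero, normEDS_one]
        ring_nf
    _ = ellWedge W 0 (m + 1) m * ellWedge W 0 2 0 := by
        linear_combination -ellWedge_plucker W 0 (m + 1) m 2 0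
    _ = W (2 * m + 1) * b ^ 2 := by
        rw [ellWedge_normEDS_zero_add_one, ellWedge_normEDS_two_zero]

variable [IsDomain R]

lemma rel_normEDS_add_sub_zero (hb : b ≠ 0) {m t : ℤ} (ht : 0 < t) (htm : t + 2 ≤ m)
    (ih : RelOneBelow W (2 * m)) : rel W (m + t) (m - t) 1 0 = 0 := by
  have T₁ := ih.mul_eq (u := 1) (k := m) (l := t) (by omega)
  have T₂ := ih.mul_eq (u := 1) (k := m - 1) (l := t - 1) (by omega)
  have T₃ := ih.mul_eq (u := 1) (k := m) (l := t - 1) (by omega)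
  have T₄ := ih.mul_eq (u := 1) (k := m - 1) (l := t) (by omega)
  have key : ellWedge W 0 (m + t) (m - t) * b ^ 2 = W (2 * m) * W (2 * t) * b ^ 2 := calc
    ellWedge W 0 (m + t) (m - t) * b ^ 2
        = ellWedge W 1 m t * ellWedge W 1 (m - 1) (t - 1) -
            ellWedge W 1 m (t - 1) * ellWedge W 1 (m - 1) t := by
          rw [← T₁, ← T₂, ← T₃, ← T₄]
          simp only [ellWedge, one_add_one_eq_two, normEDS_two]
          ring_nf
      _ = ellWedge W 1 m (m - 1) * ellWedge W 1 t (t - 1) := by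
          linear_combination -ellWedge_plucker W 1 m (m - 1) t (t - 1)
      _ = W (2 * m) * W (2 * t) * b ^ 2 := by
          rw [ellWedge_normEDS_one_sub_one, ellWedge_normEDS_one_sub_one]
          ring
  rw [rel_one_eq_zero_iff (normEDS_one ..), mul_right_cancel₀ (pow_ne_zero 2 hb) key,
    show m + t + (m - t) + 0 = 2 * m by ring, show m + t - (m - t) = 2 * t by ring, add_zero,
    normEDS_one, mul_one]

lemma rel_normEDS_add_sub_one (hb : b ≠ 0) {m t : ℤ} (ht : 0 < t) (htm : t + 2 ≤ m)
    (ih : RelOneBelow W (2 * m + 1)) : rel W (m + t) (m - t) 1 1 = 0 := by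
  have T₁ := ih.mul_eq (u := 1) (k := m + 1) (l := t) (by omega)
  have T₂ := ih.mul_eq (u := 1) (k := m - 1) (l := t - 1) (by omega)
  have T₃ := ih.mul_eq (u := 1) (k := m + 1) (l := t - 1) (by omega)
  have T₄ := ih.mul_eq (u := 1) (k := m - 1) (l := t) (by omega)
  have key : ellWedge W 1 (m + t) (m - t) * b ^ 2 = W (2 * m + 1) * W (2 * t) * b * b ^ 2 := calc
    ellWedge W 1 (m + t) (m - t) * b ^ 2
        = ellWedge W 1 (m + 1) t * ellWedge W 1 (m - 1) (t - 1) -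
            ellWedge W 1 (m + 1) (t - 1) * ellWedge W 1 (m - 1) t := by
          rw [← T₁, ← T₂, ← T₃, ← T₄]
          simp only [ellWedge, one_add_one_eq_two, normEDS_two]
          ring_nf
      _ = ellWedge W 1 (m + 1) (m - 1) * ellWedge W 1 t (t - 1) := by
          linear_combination -ellWedge_plucker W 1 (m + 1) (m - 1) t (t - 1)
      _ = W (2 * m + 1) * W (2 * t) * b * b ^ 2 := by
          rw [ellWedge_normEDS_one_add_one_sub_one (by omega) ih, ellWedge_normEDS_one_sub_one]
          ring
  rw [rel_one_eq_zero_iff (normEDS_one ..), mul_right_cancel₀ (pow_ne_zero 2 hb) key,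
    show m + t + (m - t) + 1 = 2 * m + 1 by ring, show m + t - (m - t) = 2 * t by ring,
    one_add_one_eq_two, normEDS_two]

lemma rel_normEDS_of_relOneBelow (hb : b ≠ 0) {u k l : ℤ} (hu : u = 0 ∨ u = 1) (hl : 0 ≤ l)
    (hlk : l ≤ k) (ih : RelOneBelow W (k + l + u)) : rel W k l 1 u = 0 := by
  by_cases hbase : l = 0 ∨ l = 1 ∨ l = k
  · exact rel_one_eq_zero_of_base (normEDS_zero ..) (normEDS_neg b c d) hbase
  obtain ⟨m, hkl | hkl⟩ := Int.even_or_odd' (k + l)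
  · obtain ⟨t, rfl, rfl⟩ : ∃ t, k = m + t ∧ l = m - t := ⟨k - m, by omega, by omega⟩
    rcases hu with rfl | rfl
    · exact rel_normEDS_add_sub_zero hb (by omega) (by omega) (by convert ih using 1; omega)
    · exact rel_normEDS_add_sub_one hb (by omega) (by omega) (by convert ih using 1; omega)
  · obtain ⟨t, rfl, rfl⟩ : ∃ t, k = m + 1 + t ∧ l = m - t := ⟨k - m - 1, by omega, by omega⟩
    rcases hu with rfl | rfl
    · exact rel_normEDS_add_one_sub_zero (by omega) (by omega) (by convert ih using 1; omega)
    · exact rel_normEDS_add_one_sub_one (by omega) (by omega) (by convert ih using 1; omega)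

lemma relOneBelow_normEDS (hb : b ≠ 0) (n : ℕ) : RelOneBelow W n := by
  induction n with
  | zero => intro u k l h; omega
  | succ n ih =>
    rintro u k l ⟨hu, hl, hlk, hn⟩
    rcases lt_or_eq_of_le (show k + l + u ≤ n by omega) with hlt | heq
    · exact ih u k l ⟨hu, hl, hlk, hlt⟩
    · exact rel_normEDS_of_relOneBelow hb hu hl hlk (heq ▸ ih)

theorem rel_normEDS_one (hb : b ≠ 0) {u : ℤ} (hu : u = 0 ∨ u = 1) (k l : ℤ) :
    rel W k l 1 u = 0 :=
  Int.forall_of_forall_le_of_swap_of_reflect (u := u) (by omega)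
    (fun k l h ↦ by rw [rel_swap (normEDS_neg b c d), h, neg_zero])
    (fun k l h ↦ by rw [rel_neg_sub_left (normEDS_neg b c d), h])
    (fun k l hl hlk ↦ relOneBelow_normEDS hb (k + l + u + 1).toNat u k l ⟨hu, hl, hlk, by omega⟩)
    k l

theorem isEllipticNet_normEDS (hb : b ≠ 0) : IsEllipticNet W :=
  isEllipticNet_of_rel_one (normEDS_one ..) (by rwa [normEDS_two]) fun _ hu ↦ rel_normEDS_one hb hu

end normEDS

end IsEllipticNet

lemma WeierstrassCurve.Affine.evalEval_ψ₂_ne_zero {F : Type*} [Field F] [DecidableEq F]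
    {E : Affine F} {x y : F} {h : E.Nonsingular x y}
    (h2 : Point.some _ _ h + Point.some _ _ h ≠ 0) :
    E.ψ₂.evalEval x y ≠ 0 := by
  contrapose! h2
  refine Point.add_self_of_Y_eq ?_
  rw [ψ₂, evalEval_polynomialY] at h2
  rw [negY]
  linear_combination h2

open Classical in
/-- The sequence of division polynomial values `W(n) = ψₙ(P)` satisfies the rank-one
elliptic net recurrence. -/
theorem division_polynomial_elliptic_net (F : Type*) [Field F]
    (E : WeierstrassCurve.Affine F) (x y : F) (h : E.Nonsingular x y)
    (P : E.Point) (hP : P = WeierstrassCurve.Affine.Point.some _ _ h)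
    (hord : addOrderOf P = 0 ∨ 4 ≤ addOrderOf P)
    (W : ℤ → F) (hW : ∀ n : ℤ, W n = (E.ψ n).evalEval x y) :
    ∀ p q r s : ℤ,
      W (p + q + s) * W (p - q) * W (r + s) * W r +
        W (q + r + s) * W (q - r) * W (p + s) * W p +
        W (r + p + s) * W (r - p) * W (q + s) * W q = 0 := by
  intro p q r s
  have hWψ : W = normEDS (E.ψ₂.evalEval x y) ((C E.Ψ₃).evalEval x y)
      ((C E.preΨ₄).evalEval x y) := by
    funext n
    rw [hW, WeierstrassCurve.ψ]
    exact map_normEDS (evalEvalRingHom x y) ..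
  have hP2 : P + P ≠ 0 := by
    intro h2
    have hdvd : addOrderOf P ∣ 2 := addOrderOf_dvd_of_nsmul_eq_zero (by rwa [two_nsmul])
    rcases hord with h0 | h4
    · exact two_ne_zero (zero_dvd_iff.mp (h0 ▸ hdvd))
    · exact absurd (Nat.le_of_dvd two_pos hdvd) (by omega)
  have hnet : IsEllipticNet W :=
    hWψ ▸ IsEllipticNet.isEllipticNet_normEDS (Affine.evalEval_ψ₂_ne_zero (hP ▸ hP2))
  have hodd : W (r - p) = -W (p - r) := by rw [hWψ, ← normEDS_neg, neg_sub]
  have hrel := hnet p q r s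
  rw [IsEllipticNet.rel] at hrel
  rw [hodd, add_comm r p]
  linear_combination hrel
end

section
/- Let W : ℤ → K be an elliptic net of rank 1 (elliptic divisibility sequence). For any fixed integer l, the map W_l : ℤ → K defined by W_l(n) = W(ln)/W(l)^{n²} (assuming W(l) ≠ 0) is again an elliptic divisibility sequence; equivalently, W(ln) = W_l(n)·W(l)^{n²} where W_l satisfies the EDS recurrence. -/
/-!
Mathlib's `IsEllipticSequence` is the homogeneous three-variable relation
`W(p+q)W(p-q)W(r)² - W(p+r)W(p-r)W(q)² + W(q+r)W(q-r)W(p)² = 0`, which follows from the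
two-variable recurrence and gives it back when `W(1) = 1`. Unlike the recurrence, it is stable under
`n ↦ W(ln)` and, since all its terms have the same weight `2p² + 2q² + 2r²`, under the gauge change
`W(n) ↦ W(n)·u^(n²)`. Applying both with `u = W(l)⁻¹` gives a sequence with value `1` at `1`.
-/

section

open IsEllipticNet

variable {R : Type*} [CommRing R] {W : ℤ → R}

theorem isEllipticSequence_of_recurrence
    (h : ∀ n m : ℤ, W (n + m) * W (n - m) =
      W (n + 1) * W (n - 1) * W m ^ 2 - W (m + 1) * W (m - 1) * W n ^ 2) :
    IsEllipticSequence W := fun p q r => by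
  simp only [rel, add_zero]
  linear_combination W r ^ 2 * h p q - W q ^ 2 * h p r + W p ^ 2 * h q r

namespace IsEllipticSequence

theorem recurrence_of_apply_one (h : IsEllipticSequence W) (h₁ : W 1 = 1) (n m : ℤ) :
    W (n + m) * W (n - m) =
      W (n + 1) * W (n - 1) * W m ^ 2 - W (m + 1) * W (m - 1) * W n ^ 2 := by
  have := h n m 1
  simp only [rel, add_zero, h₁] at this
  linear_combination this

theorem comp_mul_left (h : IsEllipticSequence W) (l : ℤ) :
    IsEllipticSequence fun n => W (l * n) := fun p q r => by
  simpa only [rel, mul_add, mul_sub, mul_zero, add_zero] using h (l * p) (l * q) (l * r)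

theorem mul_units_zpow_sq (h : IsEllipticSequence W) (u : Rˣ) :
    IsEllipticSequence fun n => W n * ↑(u ^ (n ^ 2)) := fun p q r => by
  set N := 2 * p ^ 2 + 2 * q ^ 2 + 2 * r ^ 2
  have weight (a b c d : ℤ) (hN : a ^ 2 + b ^ 2 + c ^ 2 + d ^ 2 = N) :
      (↑(u ^ (a ^ 2)) * ↑(u ^ (b ^ 2)) * ↑(u ^ (c ^ 2)) * ↑(u ^ (d ^ 2)) : R) = ↑(u ^ N) := by
    simp only [← Units.val_mul, ← zpow_add, hN]
  have hW := h p q r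
  simp only [rel, add_zero] at hW ⊢
  linear_combination
    W (p + q) * W (p - q) * W r * W r * weight (p + q) (p - q) r r (by ring)
    - W (p + r) * W (p - r) * W q * W q * weight (p + r) (p - r) q q (by ring)
    + W (q + r) * W (q - r) * W p * W p * weight (q + r) (q - r) p p (by ring)
    + (↑(u ^ N) : R) * hW

end IsEllipticSequence

end

/-- Scaling an EDS along a sublattice: `Wₗ(n) = W(ln)/W(l)^(n²)` is again an EDS, and
`W(ln) = Wₗ(n)·W(l)^(n²)`. -/
theorem eds_scaling (K : Type*) [Field K] (W : ℤ → K)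
    (hrec : ∀ n m : ℤ, W (n + m) * W (n - m) =
      W (n + 1) * W (n - 1) * W m ^ 2 - W (m + 1) * W (m - 1) * W n ^ 2)
    (l : ℤ) (hl : W l ≠ 0)
    (Wl : ℤ → K) (hWl : ∀ n : ℤ, Wl n = W (l * n) / W l ^ (n ^ 2)) :
    (∀ n m : ℤ, Wl (n + m) * Wl (n - m) =
      Wl (n + 1) * Wl (n - 1) * Wl m ^ 2 - Wl (m + 1) * Wl (m - 1) * Wl n ^ 2) ∧
    (∀ n : ℤ, W (l * n) = Wl n * W l ^ (n ^ 2)) := by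
  have hWl_gauge : Wl = fun n => W (l * n) * ↑((Units.mk0 (W l) hl)⁻¹ ^ (n ^ 2)) := by
    funext n
    rw [hWl, Units.val_zpow_eq_zpow_val, Units.val_inv_eq_inv_val, Units.val_mk0, inv_zpow,
      div_eq_mul_inv]
  have hWl_one : Wl 1 = 1 := by
    rw [hWl, mul_one, one_pow, zpow_one, div_self hl]
  refine ⟨?_, fun n => by rw [hWl, div_mul_cancel₀ _ (zpow_ne_zero _ hl)]⟩
  have hseq : IsEllipticSequence Wl := hWl_gauge ▸
    ((isEllipticSequence_of_recurrence hrec).comp_mul_left l).mul_units_zpow_sq _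
  exact hseq.recurrence_of_apply_one hWl_one
end

section
/- Let G be a finite cyclic group of odd order m, written additively, with generator P, and suppose one has an oracle parity : G \ {0} → Bool returning the parity of the minimal multiplier k (0 ≤ k < m with Q = k·P). Then the algorithm that repeatedly halves (replacing Q by the unique Q' with 2Q' = Q if k is even, or by the unique Q' with 2Q' = Q − P if k is odd), recording bits right-to-left, terminates in at most ⌈log₂ m⌉ + 1 steps and outputs the binary representation of k; i.e., the discrete logarithm k is correctly recovered. -/
/-- The halving algorithm: given a halving map and a parity oracle, recover the discrete
logarithm bit by bit (even step: halve; odd step: subtract `P` and halve). -/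
def halveAlg {G : Type*} [AddCommGroup G] [DecidableEq G]
    (half : G → G) (par : G → Bool) (P : G) : ℕ → G → ℕ
  | 0, _ => 0
  | fuel + 1, Q =>
      if Q = P then 1
      else if par Q then 2 * halveAlg half par P fuel (half (Q - P)) + 1
      else 2 * halveAlg half par P fuel (half Q)

/-- In a finite cyclic group of odd order generated by `P`, the halving algorithm with a
correct parity oracle, run with fuel `⌈log₂ m⌉ + 1`, outputs the minimal multiplier `k`
of any nonzero `Q`. -/
theorem halving_algorithm_correct (G : Type*) [AddCommGroup G] [DecidableEq G] [Fintype G]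
    (hodd : Odd (Fintype.card G))
    (P : G) (hgen : ∀ g : G, g ∈ AddSubgroup.zmultiples P)
    (half : G → G) (hhalf : ∀ g : G, 2 • half g = g)
    (par : G → Bool)
    (hpar : ∀ (Q : G) (k : ℕ), Q ≠ 0 → Q = k • P → (∀ j : ℕ, j < k → Q ≠ j • P) →
      (par Q = true ↔ Odd k)) :
    ∀ (Q : G) (k : ℕ), Q ≠ 0 → Q = k • P → (∀ j : ℕ, j < k → Q ≠ j • P) →
      halveAlg half par P (Nat.clog 2 (Fintype.card G) + 1) Q = k := by
  set m := Fintype.card G with hm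
  have hmpos : 0 < m := Fintype.card_pos
  have hP : addOrderOf P = m := by
    have := addOrderOf_eq_card_of_forall_mem_zmultiples hgen
    rwa [Nat.card_eq_fintype_card] at this
  -- j • P = 0 ↔ m ∣ j
  have hzero : ∀ j : ℕ, j • P = 0 ↔ m ∣ j := by
    intro j
    rw [← hP, ← addOrderOf_dvd_iff_nsmul_eq_zero]
  -- doubling is injective
  have hdblinj : ∀ x y : G, 2 • x = 2 • y → x = y := by
    intro x y hxy
    have h2 : 2 • (x - y) = 0 := by rw [smul_sub, hxy, sub_self]
    have hd2 : addOrderOf (x - y) ∣ 2 := addOrderOf_dvd_iff_nsmul_eq_zero.mpr h2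
    have hdm : addOrderOf (x - y) ∣ m := addOrderOf_dvd_card
    have hg : Nat.gcd 2 m = 1 := Nat.coprime_two_left.mpr hodd
    have h1 : addOrderOf (x - y) ∣ 1 := hg ▸ Nat.dvd_gcd hd2 hdm
    have hxy0 : (1 : ℕ) • (x - y) = 0 := addOrderOf_dvd_iff_nsmul_eq_zero.mp h1
    rw [one_nsmul] at hxy0
    exact sub_eq_zero.mp hxy0
  -- uniqueness of multipliers below m
  have huniq : ∀ a b : ℕ, a < m → b < m → a • P = b • P → a = b := by
    intro a b ha hb hab
    rcases le_total a b with h | h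
    · have : (b - a) • P = 0 := by
        have : b • P = a • P + (b - a) • P := by
          rw [← add_nsmul]
          congr 1
          omega
        rw [hab] at this
        exact (left_eq_add.mp this)
      have := Nat.eq_zero_of_dvd_of_lt ((hzero _).mp this) (by omega)
      omega
      
    · have : (a - b) • P = 0 := by
        have : a • P = b • P + (a - b) • P := by
          rw [← add_nsmul]
          congr 1
          omega
        rw [← hab] at this
        exact (left_eq_add.mp this)
      rcases Nat.eq_zero_or_pos (a - b) with h0 | hpos
      · omega
      · have := Nat.le_of_dvd hpos ((hzero _).mp this)
        omega
  -- main induction on fuel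
  have main : ∀ fuel : ℕ, ∀ k : ℕ, k < 2 ^ fuel → k < m → ∀ Q : G, Q ≠ 0 → Q = k • P →
      halveAlg half par P fuel Q = k := by
    intro fuel
    induction fuel with
    | zero =>
      intro k hk hkm Q hQ0 hQ
      interval_cases k
      simp at hQ
      exact absurd hQ hQ0
    | succ fuel ih =>
      intro k hk hkm Q hQ0 hQ
      have hk0 : k ≠ 0 := by
        rintro rfl
        simp at hQ
        exact hQ0 hQ
      have hmin : ∀ j : ℕ, j < k → Q ≠ j • P := by
        intro j hj hje
        have : j = k := huniq j k (lt_trans hj hkm) hkm (hje ▸ hQ ▸ rfl)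
        omega
      rw [halveAlg]
      by_cases hQP : Q = P
      · have h1m : 1 < m := by
          rcases Nat.lt_or_ge 1 m with h | h
          · exact h
          · exfalso
            have : m = 1 := by omega
            have := (hzero k).mpr (this ▸ Nat.one_dvd k)
            rw [← hQ] at this
            exact hQ0 this
        have : (1 : ℕ) • P = k • P := by rw [one_nsmul, ← hQ, hQP]
        have hk1 : k = 1 := (huniq 1 k h1m hkm this).symm
        rw [if_pos hQP]
        omega
      · have hparQ := hpar Q k hQ0 hQ hmin
        simp only [if_neg hQP]
        by_cases hko : Odd k
        · rw [if_pos (hparQ.mpr hko)]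
          obtain ⟨t, ht⟩ := hko
          have hQsub : Q - P = 2 • (t • P) := by
            rw [smul_smul, hQ, ht]
            rw [sub_eq_iff_eq_add, ← succ_nsmul]
          have hhq : half (Q - P) = t • P := by
            apply hdblinj
            rw [hhalf, hQsub]
          have htm : t < m := by omega
          have htne : half (Q - P) ≠ 0 := by
            rw [hhq]
            intro h
            have ht0 : t = 0 := Nat.eq_zero_of_dvd_of_lt ((hzero t).mp h) htm
            exact hQP (by rw [hQ, ht, ht0]; simp)
          have := ih t (by rw [pow_succ] at hk; omega) htm (half (Q - P)) htne hhq
          rw [this]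
          omega
        · rw [if_neg (by simpa using (fun h => hko (hparQ.mp h)))]
          obtain ⟨t, ht'⟩ := Nat.not_odd_iff_even.mp hko
          have ht : k = 2 * t := by omega
          have hQ2 : Q = 2 • (t • P) := by rw [smul_smul, hQ, ht]
          have hhq : half Q = t • P := by
            apply hdblinj
            rw [hhalf, hQ2]
          have htm : t < m := by omega
          have htne : half Q ≠ 0 := by
            rw [hhq]
            intro h
            have : t = 0 := Nat.eq_zero_of_dvd_of_lt ((hzero t).mp h) htm
            omega
          have := ih t (by rw [pow_succ] at hk; omega) htm (half Q) htne hhq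
          rw [this]
          omega
  -- conclude
  intro Q k hQ0 hQ hmin
  have hkm : k < m := by
    by_contra h
    push_neg at h
    have hmod : Q = (k % m) • P := by
      conv_lhs => rw [hQ]
      conv_lhs => rw [show k = m * (k / m) + k % m from (Nat.div_add_mod k m).symm]
      have h0 : (m * (k / m)) • P = 0 := (hzero _).mpr ⟨k / m, rfl⟩
      rw [add_nsmul, h0, zero_add]
    have hlt : k % m < k := lt_of_lt_of_le (Nat.mod_lt _ hmpos) h
    exact hmin _ hlt hmod
  have hk2 : k < 2 ^ (Nat.clog 2 m + 1) := by
    have h1 : m ≤ 2 ^ Nat.clog 2 m := Nat.le_pow_clog one_lt_two m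
    have h2 : (2:ℕ) ^ Nat.clog 2 m ≤ 2 ^ (Nat.clog 2 m + 1) :=
      Nat.pow_le_pow_right (by norm_num) (by omega)
    omega
  exact main _ k hk2 hkm Q hQ0 hQ
end
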